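/- Let c be an odd positive integer. Define G(1,c) = ∑_{x=0}^{c−1} exp(2πi·x²/c) ∈ ℂ and ε_c = 1 if c ≡ 1 (mod 4), ε_c = i if c ≡ 3 (mod 4). Then G(1,c) = ε_c · √c. -/

import Mathlib

open Finset

/-- The quadratic Gauss sum `G(a,c) = ∑_{x=0}^{c−1} exp(2πi·a·x²/c)`. -/
noncomputable def gaussSum2 (a : ℤ) (c : ℕ) : ℂ :=
  ∑ x ∈ Finset.range c,
    Complex.exp (2 * Real.pi * Complex.I * a * (x : ℂ) ^ 2 / c)

/-- The metaplectic square-root phase `ε_c` for odd `c`. -/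
noncomputable def epsOdd (c : ℕ) : ℂ :=
  if c % 4 = 1 then 1 else Complex.I

/-!
Schur's argument. The Gauss sum is the trace of the Fourier matrix `F = (ζ ^ (j * k))`,
`ζ = exp (2πi / N)`, indexed by `ZMod N`. Since `F²` is `N` times the permutation matrix of
`x ↦ -x`, `F⁴ = N²`, so the eigenvalues of `F` are `√N, i√N, -√N, -i√N`, with multiplicities
`m₀, m₁, m₂, m₃`. Four relations pin these down: they add up to `N`; `tr F² = N` (for odd `N`,
`x ↦ -x` fixes only `0`) gives `m₀ + m₂ = m₁ + m₃ + 1`; `|G|² = N` gives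
`(m₀ - m₂)² + (m₁ - m₃)² = 1`; and `det F`, a Vandermonde determinant equal to `i ^ (N choose 2)`
times a product of positive sines, fixes `m₁ + 2m₂ + 3m₃` modulo `4`.
-/

open Complex Matrix ZMod Polynomial ComplexConjugate
open scoped Real

lemma Fin.prod_prod_Ioi_mul {M : Type*} [CommMonoid M] {n : ℕ} (f : Fin n → M) :
    ∏ i, ∏ j ∈ Ioi i, f i * f j = ∏ i, f i ^ (n - 1) := by
  have hswap : ∏ i, ∏ j ∈ Ioi i, f j = ∏ j, ∏ _i ∈ Iio j, f j :=
    Finset.prod_comm' (by simp)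
  simp only [Finset.prod_mul_distrib, hswap, Finset.prod_const, Fin.card_Ioi, Fin.card_Iio]
  rw [← Finset.prod_mul_distrib]
  exact Finset.prod_congr rfl fun i _ => by rw [← pow_add]; congr 1; omega

lemma Fin.prod_prod_Ioi_const {M : Type*} [CommMonoid M] {n : ℕ} (a : M) :
    ∏ i : Fin n, ∏ _j ∈ Ioi i, a = a ^ n.choose 2 := by
  simp only [Finset.prod_const, Fin.card_Ioi, Finset.prod_pow_eq_pow_sum]
  rw [Fin.sum_univ_eq_sum_range (fun i => n - 1 - i), Finset.sum_range_reflect (fun i => i) n,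
    Finset.sum_range_id, Nat.choose_two_right]

lemma Fin.sum_cast_val {R : Type*} [CommSemiring R] (n : ℕ) :
    ∑ i : Fin n, (i : R) = (n.choose 2 : ℕ) := by
  rw [Nat.choose_two_right, ← Finset.sum_range_id, ← Fin.sum_univ_eq_sum_range (fun i => i) n]
  push_cast
  rfl

lemma Nat.choose_two_two_mul_add_one (q : ℕ) : (2 * q + 1).choose 2 = q * (2 * q + 1) := by
  rw [Nat.choose_two_right, Nat.add_sub_cancel, mul_comm, mul_assoc,
    Nat.mul_div_cancel_left _ two_pos]

lemma Nat.choose_two_two_mul_add_one_modEq (q : ℕ) : (2 * q + 1).choose 2 ≡ 3 * q [MOD 4] := by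
  rw [Nat.choose_two_two_mul_add_one, ← ZMod.natCast_eq_natCast_iff]
  push_cast
  generalize (q : ZMod 4) = z
  revert z
  decide

lemma Multiset.prod_map_sub_mul_prod_map_add {K : Type*} [CommRing K] (s : Multiset K) (y : K) :
    (s.map (y - ·)).prod * (s.map (y + ·)).prod = (s.map (y ^ 2 - · ^ 2)).prod := by
  rw [← Multiset.prod_map_mul]
  exact congrArg _ (Multiset.map_congr rfl fun r _ => by ring)

lemma Multiset.exists_eq_replicate_add_four {α : Type*} {s : Multiset α} {a b c d : α}
    (h : ∀ x ∈ s, x = a ∨ x = b ∨ x = c ∨ x = d) :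
    ∃ i j k l : ℕ, s = replicate i a + replicate j b + replicate k c + replicate l d := by
  induction s using Multiset.induction_on with
  | empty => exact ⟨0, 0, 0, 0, by simp⟩
  | cons x s ih =>
    obtain ⟨i, j, k, l, rfl⟩ := ih fun y hy => h y (mem_cons_of_mem hy)
    rcases h x (mem_cons_self x _) with rfl | rfl | rfl | rfl
    · exact ⟨i + 1, j, k, l, by simp [replicate_succ]⟩
    · exact ⟨i, j + 1, k, l, by simp [replicate_succ]⟩
    · exact ⟨i, j, k + 1, l, by simp [replicate_succ]⟩
    · exact ⟨i, j, k, l + 1, by simp [replicate_succ]⟩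

lemma Complex.exp_mul_I_sub_exp_mul_I (x y : ℂ) :
    exp (y * I) - exp (x * I) =
      exp (x / 2 * I) * exp (y / 2 * I) * (I * (2 * sin ((y - x) / 2))) := by
  have hy : exp (y * I) = exp (x / 2 * I) * exp (y / 2 * I) * exp ((y - x) / 2 * I) := by
    rw [← exp_add, ← exp_add]; ring_nf
  have hx : exp (x * I) = exp (x / 2 * I) * exp (y / 2 * I) * exp (-((y - x) / 2) * I) := by
    rw [← exp_add, ← exp_add]; ring_nf
  rw [hy, hx, Complex.sin]
  linear_combination (exp (x / 2 * I) * exp (y / 2 * I) * exp ((y - x) / 2 * I) -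
    exp (x / 2 * I) * exp (y / 2 * I) * exp (-((y - x) / 2) * I)) * I_sq

lemma Complex.eq_or_eq_of_pow_four_eq_pow_four {x y : ℂ} (h : x ^ 4 = y ^ 4) :
    x = y ∨ x = I * y ∨ x = -y ∨ x = -(I * y) := by
  have hfactor : (x - y) * ((x - I * y) * ((x + y) * (x + I * y))) = 0 := by
    linear_combination h + (y ^ 2 - x ^ 2) * y ^ 2 * I_sq
  simp only [mul_eq_zero, sub_eq_zero, add_eq_zero_iff_eq_neg] at hfactor
  tauto

lemma Complex.eq_of_mul_ofReal_eq_mul_ofReal {u v : ℂ} (hu : ‖u‖ = 1) (hv : ‖v‖ = 1) {x y : ℝ}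
    (hx : 0 < x) (hy : 0 < y) (h : u * x = v * y) : u = v := by
  have hxy : x = y := by
    simpa [hu, hv, abs_of_pos hx, abs_of_pos hy] using congrArg norm h
  rw [hxy] at h
  exact mul_right_cancel₀ (ofReal_ne_zero.2 hy.ne') h

lemma Complex.I_pow_modEq_of_mul_ofReal_eq {a b : ℕ} {x y : ℝ} (hx : 0 < x) (hy : 0 < y)
    (h : I ^ a * x = I ^ b * y) : a ≡ b [MOD 4] := by
  have := eq_of_mul_ofReal_eq_mul_ofReal (by simp) (by simp) hx hy h
  rwa [isPrimitiveRoot_I.eq_orderOf,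
    ← (isPrimitiveRoot_I.isOfFinOrder four_ne_zero).pow_eq_pow_iff_modEq]

lemma Complex.ofReal_sqrt_natCast_sq (N : ℕ) : ((√N : ℝ) : ℂ) ^ 2 = N := by
  rw [← ofReal_pow, Real.sq_sqrt N.cast_nonneg, ofReal_natCast]

theorem Matrix.roots_charpoly_sq {K n : Type*} [Field K] [IsAlgClosed K] [Fintype n]
    [DecidableEq n] (M : Matrix n n K) :
    (M ^ 2).charpoly.roots = M.charpoly.roots.map (· ^ 2) := by
  set R := M.charpoly.roots
  have hsplit : M.charpoly = (R.map (X - C ·)).prod :=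
    (IsAlgClosed.splits _).eq_prod_roots_of_monic M.charpoly_monic
  have hcard : Multiset.card R = Fintype.card n := by
    rw [← (IsAlgClosed.splits M.charpoly).natDegree_eq_card_roots, charpoly_natDegree_eq_dim]
  have heval (y : K) : M.charpoly.eval y = (R.map (y - ·)).prod := by
    rw [hsplit, eval_multiset_prod, Multiset.map_map]
    simp
  suffices (M ^ 2).charpoly = ((R.map (· ^ 2)).map (X - C ·)).prod by
    rw [this, roots_multiset_prod_X_sub_C]
  refine Polynomial.funext fun x => ?_
  obtain ⟨y, rfl⟩ := IsAlgClosed.exists_pow_nat_eq x two_pos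
  have hfactor : scalar n (y ^ 2) - M ^ 2 = -(scalar n (-y) - M) * (scalar n y - M) := by
    rw [neg_sub, map_neg, sub_neg_eq_add, add_comm, map_pow,
      ← (scalar_commute y (Commute.all y) M).sq_sub_sq]
  have hneg : (-1) ^ Fintype.card n * (R.map (-y - ·)).prod = (R.map (y + ·)).prod := by
    rw [← hcard, ← Multiset.card_map (-y - ·) R, ← Multiset.prod_map_neg, Multiset.map_map]
    exact congrArg _ (Multiset.map_congr rfl fun r _ => by simp [add_comm])
  calc (M ^ 2).charpoly.eval (y ^ 2)
      = det (-(scalar n (-y) - M)) * det (scalar n y - M) := by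
        rw [eval_charpoly, hfactor, det_mul]
    _ = (-1) ^ Fintype.card n * M.charpoly.eval (-y) * M.charpoly.eval y := by
        rw [det_neg, eval_charpoly, eval_charpoly]
    _ = (R.map (y ^ 2 - · ^ 2)).prod := by
        rw [heval, heval, hneg, mul_comm, Multiset.prod_map_sub_mul_prod_map_add]
    _ = _ := by simp [eval_multiset_prod]

theorem Matrix.pow_eq_of_mem_roots_charpoly {K n : Type*} [Field K] [Fintype n] [DecidableEq n]
    [Nonempty n] {M : Matrix n n K} {m : ℕ} {k : K} (hM : M ^ m = k • 1) {x : K}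
    (hx : x ∈ M.charpoly.roots) : x ^ m = k := by
  have hx : x ∈ spectrum K M := mem_spectrum_iff_isRoot_charpoly.2 (isRoot_of_mem_roots hx)
  have := spectrum.pow_mem_pow M m hx
  rwa [hM, ← Algebra.algebraMap_eq_smul_one, spectrum.scalar_eq, Set.mem_singleton_iff] at this

noncomputable def quarterTurnMultiset (s : ℂ) (m₀ m₁ m₂ m₃ : ℕ) : Multiset ℂ :=
  .replicate m₀ s + .replicate m₁ (I * s) + .replicate m₂ (-s) + .replicate m₃ (-(I * s))

section quarterTurnMultiset
variable (s : ℂ) (m₀ m₁ m₂ m₃ : ℕ)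

lemma card_quarterTurnMultiset :
    Multiset.card (quarterTurnMultiset s m₀ m₁ m₂ m₃) = m₀ + m₁ + m₂ + m₃ := by
  simp [quarterTurnMultiset]

lemma sum_quarterTurnMultiset : (quarterTurnMultiset s m₀ m₁ m₂ m₃).sum =
    s * (((m₀ : ℤ) - m₂ : ℤ) + ((m₁ : ℤ) - m₃ : ℤ) * I) := by
  simp only [quarterTurnMultiset, Multiset.sum_add, Multiset.sum_replicate, nsmul_eq_mul]
  push_cast
  ring

lemma sum_map_sq_quarterTurnMultiset : ((quarterTurnMultiset s m₀ m₁ m₂ m₃).map (· ^ 2)).sum =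
    s ^ 2 * (((m₀ + m₂ : ℕ) : ℂ) - (m₁ + m₃ : ℕ)) := by
  simp only [quarterTurnMultiset, Multiset.map_add, Multiset.map_replicate, Multiset.sum_add,
    Multiset.sum_replicate, nsmul_eq_mul, mul_pow, neg_sq, I_sq]
  push_cast
  ring

lemma prod_quarterTurnMultiset : (quarterTurnMultiset s m₀ m₁ m₂ m₃).prod =
    I ^ (m₁ + 2 * m₂ + 3 * m₃) * s ^ (m₀ + m₁ + m₂ + m₃) := by
  have h2 : -s = I ^ 2 * s := by rw [I_sq, neg_one_mul]
  have h3 : -(I * s) = I ^ 3 * s := by rw [pow_succ, I_sq]; ring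
  simp only [quarterTurnMultiset, h2, h3, Multiset.prod_add, Multiset.prod_replicate, mul_pow,
    ← pow_mul]
  ring

end quarterTurnMultiset

lemma ZMod.add_self_eq_zero_iff_of_odd {N : ℕ} (hN : Odd N) {j : ZMod N} :
    j + j = 0 ↔ j = 0 := by
  rw [← neg_eq_iff_add_eq_zero, ZMod.neg_eq_self_iff]
  refine or_iff_left fun h => ?_
  have := congrArg (· % 2) h
  simp [Nat.odd_iff.1 hN] at this

lemma ZMod.finEquiv_apply {N : ℕ} [NeZero N] (i : Fin N) : finEquiv N i = (i : ℕ) := by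
  obtain ⟨n, rfl⟩ : ∃ n, N = n + 1 := Nat.exists_eq_succ_of_ne_zero (NeZero.ne N)
  exact (Fin.cast_val_eq_self i).symm

noncomputable def fourierMatrix (N : ℕ) [NeZero N] : Matrix (ZMod N) (ZMod N) ℂ :=
  of fun j k => stdAddChar (j * k)

section fourierMatrix
variable {N : ℕ} [NeZero N]

lemma trace_fourierMatrix : (fourierMatrix N).trace = ∑ x : ZMod N, stdAddChar (x * x) := rfl


lemma sum_stdAddChar_mul (a : ZMod N) :
    ∑ x : ZMod N, stdAddChar (x * a) = if a = 0 then (N : ℂ) else 0 := by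
  rw [AddChar.sum_mulShift a (isPrimitive_stdAddChar N), ZMod.card, Nat.cast_ite, Nat.cast_zero]

lemma fourierMatrix_sq_apply (j k : ZMod N) :
    (fourierMatrix N ^ 2) j k = if j + k = 0 then (N : ℂ) else 0 := by
  simp only [sq, mul_apply, fourierMatrix, of_apply, ← AddChar.map_add_eq_mul]
  rw [← sum_stdAddChar_mul]
  exact Fintype.sum_congr _ _ fun l => by ring_nf

lemma trace_fourierMatrix_sq (hN : Odd N) : (fourierMatrix N ^ 2).trace = N := by
  simp [trace, fourierMatrix_sq_apply, add_self_eq_zero_iff_of_odd hN]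

lemma fourierMatrix_pow_four : fourierMatrix N ^ 4 = (N ^ 2 : ℂ) • 1 := by
  ext j k
  rw [show 4 = 2 + 2 by rfl, pow_add, mul_apply]
  simp only [fourierMatrix_sq_apply, ← eq_neg_iff_add_eq_zero]
  simp [Matrix.one_apply, sq]

lemma normSq_sum_stdAddChar_sq (hN : Odd N) :
    normSq (∑ x : ZMod N, stdAddChar (x * x)) = N := by
  have hshift (y : ZMod N) : ∑ x : ZMod N, stdAddChar (x * x - y * y) =
      ∑ d : ZMod N, stdAddChar (d * d) * stdAddChar (y * (d + d)) := by
    refine Fintype.sum_equiv (Equiv.subRight y) _ _ fun x => ?_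
    rw [← AddChar.map_add_eq_mul, Equiv.subRight_apply]
    ring_nf
  have hmul : (∑ x : ZMod N, stdAddChar (x * x)) * conj (∑ x : ZMod N, stdAddChar (x * x)) =
      N := by
    calc _ = ∑ y : ZMod N, ∑ x : ZMod N, stdAddChar (x * x - y * y) := by
          simp only [map_sum, ← AddChar.map_neg_eq_conj, Finset.sum_mul_sum, sub_eq_add_neg,
            AddChar.map_add_eq_mul]
          exact Finset.sum_comm
      _ = ∑ d : ZMod N, stdAddChar (d * d) * ∑ y : ZMod N, stdAddChar (y * (d + d)) := by
          simp only [hshift, Finset.mul_sum]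
          exact Finset.sum_comm
      _ = N := by
          simp [sum_stdAddChar_mul, add_self_eq_zero_iff_of_odd hN]
  exact_mod_cast (Complex.mul_conj _).symm.trans hmul

lemma fourierMatrix_submatrix_finEquiv :
    (fourierMatrix N).submatrix (finEquiv N).toEquiv (finEquiv N).toEquiv =
      vandermonde fun i : Fin N => exp (2 * π * I * i / N) := by
  ext i j
  rw [submatrix_apply, vandermonde_apply, fourierMatrix, of_apply, RingEquiv.toEquiv_eq_coe,
    RingEquiv.coe_toEquiv, ZMod.finEquiv_apply, ZMod.finEquiv_apply, ← Nat.cast_mul,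
    stdAddChar_apply, toCircle_natCast, ← Complex.exp_nat_mul]
  congr 1
  push_cast
  ring

lemma det_fourierMatrix_eq_prod : det (fourierMatrix N) =
    ∏ i : Fin N, ∏ j ∈ Ioi i, (exp (2 * π * I * j / N) - exp (2 * π * I * i / N)) := by
  rw [← det_vandermonde, ← fourierMatrix_submatrix_finEquiv, det_submatrix_equiv_self]

lemma prod_exp_pi_mul_I_pow_eq_one (hN : Odd N) :
    ∏ i : Fin N, exp (π * i / N * I) ^ (N - 1) = 1 := by
  obtain ⟨k, rfl⟩ := hN
  -- The total phase is `π (N - 1)² / 2 = 2π k²`.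
  have hsum : ∑ i : Fin (2 * k + 1), (π * i / (2 * k + 1 : ℕ) * I : ℂ) = k * (π * I) := by
    have hN : ((2 * k + 1 : ℕ) : ℂ) ≠ 0 := Nat.cast_ne_zero.2 (by omega)
    rw [← Finset.sum_mul, ← Finset.sum_div, ← Finset.mul_sum, Fin.sum_cast_val,
      Nat.choose_two_two_mul_add_one]
    field_simp
    push_cast
    ring
  rw [Finset.prod_pow, ← exp_sum, hsum, ← exp_nat_mul, Nat.add_sub_cancel,
    ← exp_nat_mul_two_pi_mul_I (k * k)]
  congr 1
  push_cast
  ring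

lemma det_fourierMatrix (hN : Odd N) :
    ∃ W : ℝ, 0 < W ∧ det (fourierMatrix N) = I ^ N.choose 2 * W := by
  refine ⟨∏ i : Fin N, ∏ j ∈ Ioi i, 2 * Real.sin (π * (j - i) / N), ?_, ?_⟩
  · refine Finset.prod_pos fun i _ => Finset.prod_pos fun j hj => mul_pos two_pos ?_
    have hij : (i : ℝ) < j := by exact_mod_cast Finset.mem_Ioi.1 hj
    have hjN : (j : ℝ) < N := by exact_mod_cast j.isLt
    have hN : (0 : ℝ) < N := Nat.cast_pos.2 (NeZero.pos N)
    apply Real.sin_pos_of_pos_of_lt_pi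
    · exact div_pos (mul_pos Real.pi_pos (by linarith)) hN
    · rw [div_lt_iff₀ hN]; nlinarith [Real.pi_pos, (i.val.cast_nonneg : (0:ℝ) ≤ i)]
  · have hfactor (i j : Fin N) : exp (2 * π * I * j / N) - exp (2 * π * I * i / N) =
        exp (π * i / N * I) * exp (π * j / N * I) *
          (I * ((2 * Real.sin (π * (j - i) / N) : ℝ) : ℂ)) := by
      convert exp_mul_I_sub_exp_mul_I (2 * π * i / N) (2 * π * j / N) using 2 <;>
        push_cast <;> ring_nf
    rw [det_fourierMatrix_eq_prod]
    simp_rw [hfactor]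
    rw [prod_congr rfl fun i _ => prod_mul_distrib, prod_mul_distrib, Fin.prod_prod_Ioi_mul,
      prod_exp_pi_mul_I_pow_eq_one hN, one_mul, prod_congr rfl fun i _ => prod_mul_distrib,
      prod_mul_distrib, Fin.prod_prod_Ioi_const]
    push_cast
    rfl

lemma exists_roots_charpoly_fourierMatrix : ∃ m₀ m₁ m₂ m₃ : ℕ,
    (fourierMatrix N).charpoly.roots = quarterTurnMultiset √N m₀ m₁ m₂ m₃ := by
  refine Multiset.exists_eq_replicate_add_four fun x hx => eq_or_eq_of_pow_four_eq_pow_four ?_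
  rw [pow_eq_of_mem_roots_charpoly fourierMatrix_pow_four hx, show 4 = 2 * 2 by rfl, pow_mul,
    ofReal_sqrt_natCast_sq]

end fourierMatrix

lemma multiplicities_eq {N m₀ m₁ m₂ m₃ : ℕ} (hcard : m₀ + m₁ + m₂ + m₃ = N)
    (hsq : m₀ + m₂ = m₁ + m₃ + 1) (hnorm : ((m₀ : ℤ) - m₂) ^ 2 + ((m₁ : ℤ) - m₃) ^ 2 = 1)
    (hdet : m₁ + 2 * m₂ + 3 * m₃ ≡ N.choose 2 [MOD 4]) :
    if N % 4 = 1 then m₀ = m₂ + 1 ∧ m₁ = m₃ else m₀ = m₂ ∧ m₁ = m₃ + 1 := by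
  obtain rfl : N = 2 * (m₁ + m₃) + 1 := by omega
  have hmod := hdet.trans (Nat.choose_two_two_mul_add_one_modEq _)
  unfold Nat.ModEq at hmod
  have ha : ((m₀ : ℤ) - m₂) ^ 2 ≤ 1 := by nlinarith
  have hb : ((m₁ : ℤ) - m₃) ^ 2 ≤ 1 := by nlinarith
  rw [sq_le_one_iff_abs_le_one, abs_le] at ha hb
  -- `(m₀ - m₂) + (m₁ - m₃)` has the parity of `N`, so exactly one of the two differences is `±1`.
  split_ifs <;> omega

section multiplicities
variable {N : ℕ} [NeZero N] {m₀ m₁ m₂ m₃ : ℕ}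

lemma add_multiplicities_eq
    (hR : (fourierMatrix N).charpoly.roots = quarterTurnMultiset √N m₀ m₁ m₂ m₃) :
    m₀ + m₁ + m₂ + m₃ = N := by
  have := (IsAlgClosed.splits (fourierMatrix N).charpoly).natDegree_eq_card_roots
  rwa [charpoly_natDegree_eq_dim, ZMod.card, hR, card_quarterTurnMultiset, eq_comm] at this

lemma sum_stdAddChar_sq_eq_of_roots
    (hR : (fourierMatrix N).charpoly.roots = quarterTurnMultiset √N m₀ m₁ m₂ m₃) :
    ∑ x : ZMod N, stdAddChar (x * x) = √N * (((m₀ : ℤ) - m₂ : ℤ) + ((m₁ : ℤ) - m₃ : ℤ) * I) := by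
  rw [← trace_fourierMatrix, trace_eq_sum_roots_charpoly, hR, sum_quarterTurnMultiset]

lemma multiplicities_real_eq_imag_add_one (hN : Odd N)
    (hR : (fourierMatrix N).charpoly.roots = quarterTurnMultiset √N m₀ m₁ m₂ m₃) :
    m₀ + m₂ = m₁ + m₃ + 1 := by
  have h := trace_fourierMatrix_sq hN
  rw [trace_eq_sum_roots_charpoly, roots_charpoly_sq, hR, sum_map_sq_quarterTurnMultiset,
    ofReal_sqrt_natCast_sq] at h
  have h' : ((m₀ + m₂ : ℕ) : ℂ) - (m₁ + m₃ : ℕ) = 1 :=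
    mul_left_cancel₀ (Nat.cast_ne_zero.2 (NeZero.ne N)) (h.trans (mul_one _).symm)
  exact_mod_cast sub_eq_iff_eq_add'.1 h'

lemma multiplicities_normSq (hN : Odd N)
    (hR : (fourierMatrix N).charpoly.roots = quarterTurnMultiset √N m₀ m₁ m₂ m₃) :
    ((m₀ : ℤ) - m₂) ^ 2 + ((m₁ : ℤ) - m₃) ^ 2 = 1 := by
  have h := normSq_sum_stdAddChar_sq hN
  rw [sum_stdAddChar_sq_eq_of_roots hR, normSq_mul, normSq_ofReal, ← ofReal_intCast,
    ← ofReal_intCast, normSq_add_mul_I, Real.mul_self_sqrt N.cast_nonneg] at h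
  exact_mod_cast mul_left_cancel₀ (Nat.cast_ne_zero.2 (NeZero.ne N)) (h.trans (mul_one _).symm)

lemma multiplicities_modEq_choose_two (hN : Odd N)
    (hR : (fourierMatrix N).charpoly.roots = quarterTurnMultiset √N m₀ m₁ m₂ m₃) :
    m₁ + 2 * m₂ + 3 * m₃ ≡ N.choose 2 [MOD 4] := by
  obtain ⟨W, hW, hdet⟩ := det_fourierMatrix hN
  rw [det_eq_prod_roots_charpoly, hR, prod_quarterTurnMultiset, add_multiplicities_eq hR,
    ← ofReal_pow] at hdet
  have hsqrt : 0 < √(N : ℝ) := Real.sqrt_pos.2 (Nat.cast_pos.2 (NeZero.pos N))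
  exact I_pow_modEq_of_mul_ofReal_eq (pow_pos hsqrt N) hW hdet

end multiplicities

lemma sum_stdAddChar_sq_eq {N : ℕ} [NeZero N] (hN : Odd N) :
    ∑ x : ZMod N, stdAddChar (x * x) = epsOdd N * √N := by
  obtain ⟨m₀, m₁, m₂, m₃, hR⟩ := exists_roots_charpoly_fourierMatrix (N := N)
  have hm := multiplicities_eq (add_multiplicities_eq hR)
    (multiplicities_real_eq_imag_add_one hN hR) (multiplicities_normSq hN hR)
    (multiplicities_modEq_choose_two hN hR)
  rw [sum_stdAddChar_sq_eq_of_roots hR, epsOdd]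
  split_ifs at hm ⊢ <;> obtain ⟨rfl, rfl⟩ := hm <;> push_cast <;> ring

lemma gaussSum2_one_eq (c : ℕ) [NeZero c] :
    gaussSum2 1 c = ∑ x : ZMod c, stdAddChar (x * x) := by
  rw [gaussSum2, ← Fin.sum_univ_eq_sum_range, ← (finEquiv c).toEquiv.sum_comp]
  refine Fintype.sum_congr _ _ fun i => ?_
  rw [RingEquiv.toEquiv_eq_coe, RingEquiv.coe_toEquiv, ZMod.finEquiv_apply, ← Nat.cast_mul,
    stdAddChar_apply, toCircle_natCast]
  push_cast
  ring_nf

/-- Gauss's evaluation: for odd `c > 0`, `G(1,c) = ε_c·√c`. -/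
theorem gauss_sum_evaluation (c : ℕ) (hc : Odd c) (hpos : 0 < c) :
    gaussSum2 1 c = epsOdd c * (Real.sqrt c : ℂ) := by
  have : NeZero c := ⟨hpos.ne'⟩
  rw [gaussSum2_one_eq, sum_stdAddChar_sq_eq hc]
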